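/- arXiv:2510.06740 — 4 statements merged into one kernel-verified Lean document; each statement's English description precedes it below -/
import Mathlib

section
/- Let Σ be a finite monoid and W a finite-dimensional real vector space. Suppose L : (Σ → W) → (Σ → W) is a linear map that is equivariant with respect to the right regular representation, i.e., L ∘ A_σ = A_σ ∘ L for all σ ∈ Σ, where (A_σ x)(τ) = x(τσ). Then there exist linear maps b_σ : W → W, for σ ∈ Σ, such that (L x)(τ) = ∑_{σ ∈ Σ} b_σ(x(στ)) for all x : Σ → W and all τ ∈ Σ. In other words, every linear equivariant endomorphism of the right regular representation is a combination of the adjacency maps B_σ (given by (B_σ x)(τ) = x(στ)) with coefficients b_σ in the linear endomorphisms of W. -/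
/-- The right regular representation of a monoid `M` on the function space `M → V`:
`(rightReg M V σ x) τ = x (τ * σ)`. -/
def rightReg (M : Type*) [Monoid M] (V : Type*) [AddCommGroup V] [Module ℝ V]
    (σ : M) : (M → V) →ₗ[ℝ] (M → V) where
  toFun x := fun τ => x (τ * σ)
  map_add' _ _ := rfl
  map_smul' _ _ := rfl

/-- Every linear endomorphism of `M → W` that is equivariant for the right regular
representation of the finite monoid `M` is a combination of the adjacency maps
`B_σ` (given by `(B_σ x) τ = x (σ * τ)`) with coefficients in the linear
endomorphisms of `W`:  `(L x) τ = ∑ σ, b_σ (x (σ * τ))`. -/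
theorem equivariant_linear_endomorphism_form
    (M : Type*) [Monoid M] [Fintype M]
    (W : Type*) [AddCommGroup W] [Module ℝ W] [FiniteDimensional ℝ W]
    (L : (M → W) →ₗ[ℝ] (M → W))
    (hL : ∀ σ : M, L ∘ₗ rightReg M W σ = rightReg M W σ ∘ₗ L) :
    ∃ b : M → (W →ₗ[ℝ] W),
      ∀ (x : M → W) (τ : M), L x τ = ∑ σ : M, b σ (x (σ * τ)) := by
  classical
  refine ⟨fun σ => LinearMap.proj 1 ∘ₗ L ∘ₗ LinearMap.single ℝ (fun _ => W) σ, ?_⟩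
  intro x τ
  have h1 : L x τ = L (rightReg M W τ x) 1 := by
    have := congrArg (fun F => (F x) 1) (hL τ)
    simp only [LinearMap.comp_apply] at this
    simpa [rightReg, one_mul] using this.symm
  rw [h1]
  have h2 : rightReg M W τ x = ∑ σ : M, Pi.single σ (x (σ * τ)) := by
    funext ρ
    simp [rightReg, Finset.sum_apply, Pi.single_apply]
  rw [h2, map_sum]
  simp [LinearMap.single]
  rfl
end

section
/- Let Σ be a finite monoid and W a real vector space. Suppose F : (Σ → W) → (Σ → W) is any (possibly nonlinear) map that is equivariant with respect to the right regular representation, i.e., F(A_σ x) = A_σ F(x) for all σ ∈ Σ and all x : Σ → W, where (A_σ x)(τ) = x(τσ). Then for every τ ∈ Σ and all x, x' : Σ → W satisfying x(στ) = x'(στ) for every σ ∈ Σ, one has F(x)(τ) = F(x')(τ). In particular, the τ-component of F(x) depends only on the values x(σ) for σ ⊵ τ, where σ' ⊵ τ means there exists ρ ∈ Σ with ρτ = σ'. -/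
theorem apply_eq_apply_one_of_rightTranslate_equivariant {M W : Type*} [Monoid M]
    {F : (M → W) → (M → W)}
    (hF : ∀ (σ : M) (x : M → W), F (fun τ => x (τ * σ)) = fun τ => F x (τ * σ))
    (x : M → W) (τ : M) :
    F x τ = F (fun σ => x (σ * τ)) 1 := by
  simp only [hF, one_mul]

theorem equivariant_component_depends_upstream_general
    (M : Type*) [Monoid M]
    (W : Type*)
    (F : (M → W) → (M → W))
    (hF : ∀ (σ : M) (x : M → W), F (fun τ => x (τ * σ)) = fun τ => F x (τ * σ)) :
    ∀ (τ : M) (x x' : M → W),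
      (∀ σ : M, x (σ * τ) = x' (σ * τ)) → F x τ = F x' τ := by
  intro τ x x' h
  rw [apply_eq_apply_one_of_rightTranslate_equivariant hF x,
    apply_eq_apply_one_of_rightTranslate_equivariant hF x', funext h]

/-- If a (possibly nonlinear) map `F` on `M → W` is equivariant with respect to the
right regular representation `(A_σ x) τ = x (τ * σ)` of the finite monoid `M`, then the
`τ`-component of `F x` depends only on the values `x (σ * τ)`, i.e. on the coordinates
of the cells `σ' ⊵ τ` (those `σ'` with `ρ * τ = σ'` for some `ρ`). -/
theorem equivariant_component_depends_upstream
    (M : Type*) [Monoid M] [Fintype M]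
    (W : Type*) [AddCommGroup W] [Module ℝ W]
    (F : (M → W) → (M → W))
    (hF : ∀ (σ : M) (x : M → W), F (fun τ => x (τ * σ)) = fun τ => F x (τ * σ)) :
    ∀ (τ : M) (x x' : M → W),
      (∀ σ : M, x (σ * τ) = x' (σ * τ)) → F x τ = F x' τ :=
  equivariant_component_depends_upstream_general M W F hF
end

section
/- Let Σ be a finite set equipped with a partial order ⊴, let W be a finite-dimensional real normed vector space, and let μ : Σ → ℕ be antitone in the sense that σ ⊵ τ implies μ(σ) ≤ μ(τ). Let q : (Σ → W) × ℝ → (Σ → W) satisfy the following quadratic triangular bound: there exist C, ε > 0 such that for every τ ∈ Σ, every u : Σ → W with max_σ ‖u(σ)‖ ≤ ε and every |λ| ≤ ε, one has ‖q(u, λ)(τ)‖ ≤ C·( max_{σ ⊵ τ} ‖u(σ)‖ + |λ| )². Let y : ℝ → (Σ → W) be a curve defined for small λ > 0 such that for each σ ∈ Σ: if μ(σ) ≥ 1 there is θ_σ ∈ W with θ_σ ≠ 0 and ‖y(λ)(σ) − λ^(2^(−μ(σ))) • θ_σ‖ = O(λ^(2^(−(μ(σ)−1)))) as λ → 0⁺,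 and if μ(σ) = 0 then ‖y(λ)(σ)‖ = O(λ). Define v(λ) := y(λ) + q(y(λ), λ). Then for each τ ∈ Σ: if μ(τ) ≥ 1 then ‖v(λ)(τ) − λ^(2^(−μ(τ))) • θ_τ‖ = O(λ^(2^(−(μ(τ)−1)))) as λ → 0⁺ (so v(λ)(τ) has square-root order μ(τ) with the same leading vector θ_τ), and if μ(τ) = 0 then ‖v(λ)(τ)‖ = O(λ). -/
open Filter Asymptotics

/-- `upMax u τ` is `max_{σ ⊵ τ} ‖u σ‖`, the maximum of the norms of the coordinates of
the cells above `τ` in the feedforward order. -/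
noncomputable def upMax {S : Type*} [Fintype S] [PartialOrder S]
    [DecidableRel ((· ≤ ·) : S → S → Prop)]
    {W : Type*} [NormedAddCommGroup W] (u : S → W) (τ : S) : ℝ :=
  (Finset.univ.filter (fun σ => τ ≤ σ)).sup'
    ⟨τ, Finset.mem_filter.mpr ⟨Finset.mem_univ τ, le_refl τ⟩⟩ (fun σ => ‖u σ‖)

/-- For `a ≤ b`, `l ^ b = O(l ^ a)` as `l → 0⁺`. -/
lemma rpow_isBigO_rpow_aux {a b : ℝ} (h : a ≤ b) :
    (fun l : ℝ => l ^ b) =O[nhdsWithin (0 : ℝ) (Set.Ioi 0)] fun l => l ^ a := by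
  apply Asymptotics.IsBigO.of_bound 1
  filter_upwards [Ioc_mem_nhdsGT_of_mem (Set.mem_Ico.mpr ⟨le_refl (0 : ℝ), one_pos⟩)]
    with l hl
  rw [one_mul, Real.norm_eq_abs, Real.norm_eq_abs,
    abs_of_nonneg (Real.rpow_nonneg hl.1.le _), abs_of_nonneg (Real.rpow_nonneg hl.1.le _)]
  exact Real.rpow_le_rpow_of_exponent_ge hl.1 hl.2 h

/-- For `0 < e`, `l ^ e → 0` as `l → 0⁺`. -/
lemma tendsto_rpow_zero_aux {e : ℝ} (he : 0 < e) :
    Tendsto (fun l : ℝ => l ^ e) (nhdsWithin (0 : ℝ) (Set.Ioi 0)) (nhds 0) := by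
  have := (Real.continuousAt_rpow_const 0 e (Or.inr he.le)).continuousWithinAt
    (s := Set.Ioi (0 : ℝ))
  rw [ContinuousWithinAt, Real.zero_rpow he.ne'] at this
  exact this

/-- Adding the center-manifold correction `q` (admissible, vanishing to second order,
with `τ`-component depending only on the coordinates `σ ⊵ τ`, encoded by the quadratic
triangular bound) to a curve `y` with ordered cell-by-cell square-root asymptotics does
not change the cell-by-cell asymptotics, including the leading vectors `θ`. -/
theorem center_manifold_correction_preserves_asymptotics
    (S : Type*) [Fintype S] [PartialOrder S]
    [DecidableRel ((· ≤ ·) : S → S → Prop)]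
    (W : Type*) [NormedAddCommGroup W] [NormedSpace ℝ W] [FiniteDimensional ℝ W]
    (μ : S → ℕ) (hμ : ∀ σ τ : S, τ ≤ σ → μ σ ≤ μ τ)
    (q : (S → W) × ℝ → (S → W))
    (hq : ∃ C ε : ℝ, 0 < C ∧ 0 < ε ∧ ∀ (τ : S) (u : S → W) (l : ℝ),
        (∀ σ, ‖u σ‖ ≤ ε) → |l| ≤ ε →
        ‖q (u, l) τ‖ ≤ C * (upMax u τ + |l|) ^ 2)
    (y v : ℝ → (S → W)) (θ : S → W)
    (hv : ∀ᶠ l in nhdsWithin (0 : ℝ) (Set.Ioi 0), v l = y l + q (y l, l))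
    (hy1 : ∀ σ : S, 1 ≤ μ σ → θ σ ≠ 0 ∧
        ((fun l : ℝ => ‖y l σ - (l ^ ((2 : ℝ) ^ (-(μ σ : ℤ)))) • θ σ‖)
            =O[nhdsWithin (0 : ℝ) (Set.Ioi 0)]
          (fun l : ℝ => l ^ ((2 : ℝ) ^ (1 - (μ σ : ℤ))))))
    (hy0 : ∀ σ : S, μ σ = 0 →
        (fun l : ℝ => ‖y l σ‖) =O[nhdsWithin (0 : ℝ) (Set.Ioi 0)] (fun l : ℝ => l)) :
    ∀ τ : S,
      (1 ≤ μ τ →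
        ((fun l : ℝ => ‖v l τ - (l ^ ((2 : ℝ) ^ (-(μ τ : ℤ)))) • θ τ‖)
            =O[nhdsWithin (0 : ℝ) (Set.Ioi 0)]
          (fun l : ℝ => l ^ ((2 : ℝ) ^ (1 - (μ τ : ℤ)))))) ∧
      (μ τ = 0 →
        (fun l : ℝ => ‖v l τ‖) =O[nhdsWithin (0 : ℝ) (Set.Ioi 0)] (fun l : ℝ => l)) := by
  obtain ⟨C, ε, hC, hε, hqb⟩ := hq
  set L := nhdsWithin (0 : ℝ) (Set.Ioi 0) with hL
  -- exponents
  set a : S → ℝ := fun σ => (2 : ℝ) ^ (-(μ σ : ℤ)) with ha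
  set b : S → ℝ := fun σ => (2 : ℝ) ^ (1 - (μ σ : ℤ)) with hb
  have ha_pos : ∀ σ, 0 < a σ := fun σ => zpow_pos two_pos _
  have ha_le_one : ∀ σ, a σ ≤ 1 := by
    intro σ
    show (2 : ℝ) ^ (-(μ σ : ℤ)) ≤ 1
    have : (2 : ℝ) ^ (-(μ σ : ℤ)) ≤ (2 : ℝ) ^ (0 : ℤ) :=
      zpow_le_zpow_right₀ one_le_two (by omega)
    simpa using this
  have hab : ∀ σ, a σ ≤ b σ := fun σ =>
    zpow_le_zpow_right₀ one_le_two (by omega)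
  have hba : ∀ σ, b σ = a σ + a σ := by
    intro σ
    show (2 : ℝ) ^ (1 - (μ σ : ℤ)) = (2 : ℝ) ^ (-(μ σ : ℤ)) + (2 : ℝ) ^ (-(μ σ : ℤ))
    rw [show (1 : ℤ) - (μ σ : ℤ) = 1 + -(μ σ : ℤ) by ring,
      zpow_add₀ (two_ne_zero : (2 : ℝ) ≠ 0)]
    ring
  -- Step A : each coordinate of y is O(l ^ a σ)
  have hA : ∀ σ : S, (fun l : ℝ => ‖y l σ‖) =O[L] fun l => l ^ a σ := by
    intro σ
    rcases Nat.eq_zero_or_pos (μ σ) with h0 | h1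
    · have := hy0 σ h0
      refine this.trans ?_
      have : (fun l : ℝ => l) =ᶠ[L] fun l => l ^ (1 : ℝ) := by
        filter_upwards [self_mem_nhdsWithin] with l _
        rw [Real.rpow_one]
      exact this.isBigO.trans (rpow_isBigO_rpow_aux (ha_le_one σ))
    · obtain ⟨_, hO⟩ := hy1 σ h1
      rw [isBigO_norm_left] at hO
      rw [isBigO_norm_left]
      have h2 : (fun l : ℝ => y l σ) =
          fun l : ℝ => (y l σ - (l ^ a σ) • θ σ) + (l ^ a σ) • θ σ := by
        funext l; abel
      rw [h2]
      refine IsBigO.add (hO.trans (rpow_isBigO_rpow_aux (hab σ))) ?_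
      refine Asymptotics.IsBigO.of_bound ‖θ σ‖ ?_
      filter_upwards [self_mem_nhdsWithin] with l hl
      rw [norm_smul, Real.norm_eq_abs, mul_comm]
  -- Step B : upMax of y at τ is O(l ^ a τ)
  have hB : ∀ τ : S, (fun l : ℝ => upMax (y l) τ) =O[L] fun l => l ^ a τ := by
    intro τ
    have hsum : (fun l : ℝ =>
        ∑ σ ∈ Finset.univ.filter (fun σ => τ ≤ σ), ‖y l σ‖) =O[L] fun l => l ^ a τ := by
      refine Asymptotics.IsBigO.fun_sum ?_
      intro σ hσ
      have hle : μ σ ≤ μ τ := hμ σ τ (Finset.mem_filter.mp hσ).2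
      have : a τ ≤ a σ := zpow_le_zpow_right₀ one_le_two (by omega)
      exact (hA σ).trans (rpow_isBigO_rpow_aux this)
    refine IsBigO.trans ?_ hsum
    refine Asymptotics.IsBigO.of_bound 1 (Eventually.of_forall fun l => ?_)
    rw [one_mul, Real.norm_eq_abs, Real.norm_eq_abs]
    have h1 : upMax (y l) τ ≤ ∑ σ ∈ Finset.univ.filter (fun σ => τ ≤ σ), ‖y l σ‖ := by
      refine Finset.sup'_le _ _ fun σ hσ => ?_
      exact Finset.single_le_sum (fun i _ => norm_nonneg _) hσ
    have h0 : (0 : ℝ) ≤ upMax (y l) τ := by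
      refine le_trans (norm_nonneg (y l τ)) ?_
      exact Finset.le_sup' (fun σ => ‖y l σ‖)
        (Finset.mem_filter.mpr ⟨Finset.mem_univ τ, le_refl τ⟩)
    rw [abs_of_nonneg h0, abs_of_nonneg (le_trans h0 h1)]
    exact h1
  -- identity is O(l ^ a τ)
  have hid : ∀ τ : S, (fun l : ℝ => |l|) =O[L] fun l => l ^ a τ := by
    intro τ
    have h1 : (fun l : ℝ => |l|) =ᶠ[L] fun l => l ^ (1 : ℝ) := by
      filter_upwards [self_mem_nhdsWithin] with l hl
      rw [Real.rpow_one, abs_of_pos hl]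
    exact h1.isBigO.trans (rpow_isBigO_rpow_aux (ha_le_one τ))
  -- eventual smallness of y and l
  have hsmall : ∀ᶠ l in L, (∀ σ, ‖y l σ‖ ≤ ε) ∧ |l| ≤ ε := by
    have h1 : ∀ σ : S, ∀ᶠ l in L, ‖y l σ‖ ≤ ε := by
      intro σ
      have ht : Tendsto (fun l : ℝ => ‖y l σ‖) L (nhds 0) :=
        (hA σ).trans_tendsto (tendsto_rpow_zero_aux (ha_pos σ))
      exact ht.eventually_le_const (by linarith : (0 : ℝ) < ε)
    have h2 : ∀ᶠ l in L, |l| ≤ ε := by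
      have : Tendsto (fun l : ℝ => |l|) L (nhds 0) := by
        have h := (continuous_abs.tendsto (0 : ℝ)).mono_left
          (nhdsWithin_le_nhds (s := Set.Ioi (0 : ℝ)))
        simpa using h
      exact this.eventually_le_const (by linarith : (0 : ℝ) < ε)
    filter_upwards [eventually_all.mpr h1, h2] with l ha hb using ⟨ha, hb⟩
  -- Step C : the correction is O(l ^ b τ)
  have hQ : ∀ τ : S, (fun l : ℝ => q (y l, l) τ) =O[L] fun l => l ^ b τ := by
    intro τ
    have hsum : (fun l : ℝ => upMax (y l) τ + |l|) =O[L] fun l => l ^ a τ :=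
      (hB τ).add (hid τ)
    have hsq : (fun l : ℝ => (upMax (y l) τ + |l|) ^ 2) =O[L] fun l => l ^ b τ := by
      have := hsum.mul hsum
      refine IsBigO.trans ?_ (this.congr' (EventuallyEq.refl _ _) ?_)
      · refine (EventuallyEq.of_eq ?_).isBigO
        funext l; ring
      · filter_upwards [self_mem_nhdsWithin] with l hl
        rw [← Real.rpow_add hl, ← hba τ]
    refine IsBigO.trans ?_ hsq
    refine Asymptotics.IsBigO.of_bound C ?_
    filter_upwards [hsmall] with l hl
    rw [Real.norm_eq_abs, abs_of_nonneg (by positivity : (0 : ℝ) ≤ (upMax (y l) τ + |l|) ^ 2)]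
    exact hqb τ (y l) l hl.1 hl.2
  -- conclusion
  intro τ
  constructor
  · intro h1
    rw [isBigO_norm_left]
    have heq : (fun l : ℝ => v l τ - (l ^ a τ) • θ τ) =ᶠ[L]
        fun l : ℝ => (y l τ - (l ^ a τ) • θ τ) + q (y l, l) τ := by
      filter_upwards [hv] with l hl
      rw [hl]; simp; abel
    refine heq.isBigO.trans ?_
    obtain ⟨_, hO⟩ := hy1 τ h1
    rw [isBigO_norm_left] at hO
    exact hO.add (hQ τ)
  · intro h0
    rw [isBigO_norm_left]
    have heq : (fun l : ℝ => v l τ) =ᶠ[L] fun l : ℝ => y l τ + q (y l, l) τ := by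
      filter_upwards [hv] with l hl
      rw [hl]; simp
    refine heq.isBigO.trans ?_
    have hy := hy0 τ h0
    rw [isBigO_norm_left] at hy
    refine hy.add ?_
    refine (hQ τ).trans ?_
    have hb2 : b τ = (2 : ℝ) := by
      show (2 : ℝ) ^ (1 - (μ τ : ℤ)) = 2
      rw [h0]; norm_num
    rw [hb2]
    have h1 : (fun l : ℝ => l) =ᶠ[L] fun l => l ^ (1 : ℝ) := by
      filter_upwards [self_mem_nhdsWithin] with l _
      rw [Real.rpow_one]
    exact (rpow_isBigO_rpow_aux (by norm_num : (1 : ℝ) ≤ 2)).trans h1.symm.isBigO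
end

section
/- Let Σ be a finite set equipped with a partial order ⊴, let W be a finite-dimensional real normed vector space, and let μ : Σ → ℕ be antitone in the sense that σ ⊵ τ implies μ(σ) ≤ μ(τ). Let ℓ : (Σ → W) × ℝ → (Σ → W) be linear and triangular: for every τ ∈ Σ, all λ ∈ ℝ, and all u, u' with u(σ) = u'(σ) for every σ ⊵ τ, one has ℓ(u, λ)(τ) = ℓ(u', λ)(τ). Let q : (Σ → W) × ℝ → (Σ → W) satisfy the quadratic triangular bound: there exist C, ε > 0 such that for every τ, every u with max_σ ‖u(σ)‖ ≤ ε and every |λ| ≤ ε, ‖q(u, λ)(τ)‖ ≤ C·( max_{σ ⊵ τ} ‖u(σ)‖ + |λ| )². Let v, y : ℝ → (Σ → W) be curves defined for small λ > 0 with y(λ) = ℓ(v(λ), λ) and v(λ) = y(λ) + q(y(λ), λ) for all sufficiently small λ > 0. Assume for each σ ∈ Σ: if μ(σ) ≥ 1 there is θ_σ ∈ W with θ_σ ≠ 0 and ‖v(λ)(σ) − λ^(2^(−μ(σ))) • θ_σ‖ = O(λ^(2^(−(μ(σ)−1)))) as λ → 0⁺, and if μ(σ) = 0 then ‖v(λ)(σ)‖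 = O(λ). Then y has the same cell-by-cell asymptotics: for each τ with μ(τ) ≥ 1, ‖y(λ)(τ) − λ^(2^(−μ(τ))) • θ_τ‖ = O(λ^(2^(−(μ(τ)−1)))) as λ → 0⁺, and for each τ with μ(τ) = 0, ‖y(λ)(τ)‖ = O(λ). -/
open Filter Asymptotics

/-- Let `v` be the representation of a branch of steady states on the center manifold and
`y` its representation in the generalized kernel, related by the equivariant linear
triangular map `ℓ` (namely `y = ℓ(v, λ)`) and by the center-manifold map `q`
(namely `v = y + q(y, λ)`), where `q` satisfies the quadratic triangular bound.
If the cell-by-cell square-root asymptotics of `v` are ordered compatibly with the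
antitone map `μ`, then `y` has the same cell-by-cell asymptotics, with the same
leading vectors `θ`. -/
theorem kernel_projection_preserves_asymptotics
    (S : Type*) [Fintype S] [PartialOrder S]
    [DecidableRel ((· ≤ ·) : S → S → Prop)]
    (W : Type*) [NormedAddCommGroup W] [NormedSpace ℝ W] [FiniteDimensional ℝ W]
    (μ : S → ℕ) (hμ : ∀ σ τ : S, τ ≤ σ → μ σ ≤ μ τ)
    (ℓ : ((S → W) × ℝ) →ₗ[ℝ] (S → W))
    (hℓtri : ∀ (τ : S) (l : ℝ) (u u' : S → W),
        (∀ σ : S, τ ≤ σ → u σ = u' σ) → ℓ (u, l) τ = ℓ (u', l) τ)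
    (q : (S → W) × ℝ → (S → W))
    (hq : ∃ C ε : ℝ, 0 < C ∧ 0 < ε ∧ ∀ (τ : S) (u : S → W) (l : ℝ),
        (∀ σ, ‖u σ‖ ≤ ε) → |l| ≤ ε →
        ‖q (u, l) τ‖ ≤ C * (upMax u τ + |l|) ^ 2)
    (v y : ℝ → (S → W)) (θ : S → W)
    (hvy : ∀ᶠ l in nhdsWithin (0 : ℝ) (Set.Ioi 0),
        y l = ℓ (v l, l) ∧ v l = y l + q (y l, l))
    (hv1 : ∀ σ : S, 1 ≤ μ σ → θ σ ≠ 0 ∧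
        ((fun l : ℝ => ‖v l σ - (l ^ ((2 : ℝ) ^ (-(μ σ : ℤ)))) • θ σ‖)
            =O[nhdsWithin (0 : ℝ) (Set.Ioi 0)]
          (fun l : ℝ => l ^ ((2 : ℝ) ^ (1 - (μ σ : ℤ))))))
    (hv0 : ∀ σ : S, μ σ = 0 →
        (fun l : ℝ => ‖v l σ‖) =O[nhdsWithin (0 : ℝ) (Set.Ioi 0)] (fun l : ℝ => l)) :
    ∀ τ : S,
      (1 ≤ μ τ →
        ((fun l : ℝ => ‖y l τ - (l ^ ((2 : ℝ) ^ (-(μ τ : ℤ)))) • θ τ‖)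
            =O[nhdsWithin (0 : ℝ) (Set.Ioi 0)]
          (fun l : ℝ => l ^ ((2 : ℝ) ^ (1 - (μ τ : ℤ)))))) ∧
      (μ τ = 0 →
        (fun l : ℝ => ‖y l τ‖) =O[nhdsWithin (0 : ℝ) (Set.Ioi 0)] (fun l : ℝ => l)) := by
  classical
  obtain ⟨C, ε, hC, hε, hqb⟩ := hq
  set F := nhdsWithin (0 : ℝ) (Set.Ioi 0) with hFdef
  have hFpos : ∀ᶠ l in F, 0 < l := eventually_mem_nhdsWithin
  have hF1 : ∀ᶠ l in F, l ≤ 1 :=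
    ((eventually_lt_nhds one_pos).filter_mono nhdsWithin_le_nhds).mono fun l h => le_of_lt h
  let e : S → ℝ := fun σ => (2 : ℝ) ^ (-(μ σ : ℤ))
  have he_pos : ∀ σ, 0 < e σ := fun σ => zpow_pos (by norm_num) _
  have he_le1 : ∀ σ, e σ ≤ 1 := fun σ => by
    have h := zpow_le_zpow_right₀ (by norm_num : (1:ℝ) ≤ 2)
      (by simp : -(μ σ : ℤ) ≤ 0)
    rwa [zpow_zero] at h
  have he_mono : ∀ σ τ : S, μ σ ≤ μ τ → e τ ≤ e σ := fun σ τ h =>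
    zpow_le_zpow_right₀ (by norm_num : (1:ℝ) ≤ 2) (by exact_mod_cast neg_le_neg (by exact_mod_cast h))
  have hrpow_le : ∀ {l a b : ℝ}, 0 < l → l ≤ 1 → a ≤ b → l ^ b ≤ l ^ a :=
    fun hl hl1 hab => Real.rpow_le_rpow_of_exponent_ge hl hl1 hab
  have h2e : ∀ σ : S, (2 : ℝ) ^ (1 - (μ σ : ℤ)) = 2 * e σ := by
    intro σ
    rw [sub_eq_add_neg, zpow_add₀ (two_ne_zero), zpow_one]
  -- Step 1 : pointwise bound for v
  have hvK : ∀ σ : S, ∃ K : ℝ, 0 ≤ K ∧ ∀ᶠ l in F, ‖v l σ‖ ≤ K * l ^ e σ := by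
    intro σ
    rcases Nat.eq_zero_or_pos (μ σ) with h0 | h1
    · obtain ⟨c, hc, hbd⟩ := (hv0 σ h0).exists_pos
      refine ⟨c, hc.le, ?_⟩
      filter_upwards [hbd.bound, hFpos] with l hb hl
      have heσ : e σ = 1 := by simp [e, h0]
      rw [heσ, Real.rpow_one]
      simpa [Real.norm_eq_abs, abs_of_pos hl] using hb
    · obtain ⟨θne, hO⟩ := hv1 σ h1
      obtain ⟨c, hc, hbd⟩ := hO.exists_pos
      refine ⟨c + ‖θ σ‖, by positivity, ?_⟩
      filter_upwards [hbd.bound, hFpos, hF1] with l hb hl hl1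
      have hle : l ^ ((2:ℝ) ^ (1 - (μ σ : ℤ))) ≤ l ^ e σ := by
        rw [h2e σ]
        exact hrpow_le hl hl1 (by linarith [he_pos σ])
      have h1' : ‖v l σ - (l ^ e σ) • θ σ‖ ≤ c * l ^ e σ := by
        rw [norm_norm, Real.norm_eq_abs,
          abs_of_nonneg (Real.rpow_nonneg hl.le _)] at hb
        exact hb.trans (mul_le_mul_of_nonneg_left hle hc.le)
      have h2' : ‖(l ^ e σ) • θ σ‖ = l ^ e σ * ‖θ σ‖ := by
        rw [norm_smul, Real.norm_eq_abs, abs_of_nonneg (Real.rpow_nonneg hl.le _)]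
      calc ‖v l σ‖ ≤ ‖v l σ - (l ^ e σ) • θ σ‖ + ‖(l ^ e σ) • θ σ‖ := by
            simpa using norm_add_le (v l σ - (l ^ e σ) • θ σ) ((l ^ e σ) • θ σ)
        _ ≤ c * l ^ e σ + l ^ e σ * ‖θ σ‖ := by rw [h2']; exact add_le_add_left h1' _
        _ = (c + ‖θ σ‖) * l ^ e σ := by ring
  choose K hK0 hKv using hvK
  -- operator norm of ℓ
  obtain ⟨Cℓ, hCℓ0, hℓop⟩ : ∃ Cℓ : ℝ, 0 ≤ Cℓ ∧ ∀ x : (S → W) × ℝ, ‖ℓ x‖ ≤ Cℓ * ‖x‖ :=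
    ⟨‖LinearMap.toContinuousLinearMap ℓ‖, norm_nonneg _,
      fun x => (LinearMap.toContinuousLinearMap ℓ).le_opNorm x⟩
  set Kt : ℝ := (∑ σ : S, K σ) + 1 with hKtdef
  have hKsum : 0 ≤ ∑ σ : S, K σ := Finset.sum_nonneg fun σ _ => hK0 σ
  have hKt1 : 1 ≤ Kt := by simp only [hKtdef]; linarith
  have hKσ : ∀ σ, K σ ≤ Kt := fun σ => by
    have h1 : K σ ≤ ∑ σ' : S, K σ' :=
      Finset.single_le_sum (fun σ' _ => hK0 σ') (Finset.mem_univ σ)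
    simp only [hKtdef]; linarith
  set M : ℝ := Cℓ * Kt with hMdef
  have hM0 : 0 ≤ M := by positivity
  -- Step 2 : pointwise bound for y
  have hyb : ∀ᶠ l in F, ∀ σ, ‖y l σ‖ ≤ M * l ^ e σ := by
    filter_upwards [hvy, hFpos, hF1, Filter.eventually_all.mpr hKv] with l hvyl hl hl1 hKl
    obtain ⟨hyl, -⟩ := hvyl
    intro σ
    set u' : S → W := fun σ' => if σ ≤ σ' then v l σ' else 0 with hu'
    have hy : y l σ = ℓ (u', l) σ := by
      rw [hyl]
      exact hℓtri σ l (v l) u' fun σ' hσ' => by simp [hu', hσ']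
    have hb2 : (0:ℝ) ≤ Kt * l ^ e σ := by positivity
    have hub : ‖(u', l)‖ ≤ Kt * l ^ e σ := by
      rw [Prod.norm_def]
      refine max_le ?_ ?_
      · refine (pi_norm_le_iff_of_nonneg hb2).mpr fun σ' => ?_
        by_cases hσ' : σ ≤ σ'
        · have hee : e σ ≤ e σ' := he_mono σ' σ (hμ σ' σ hσ')
          have hll : l ^ e σ' ≤ l ^ e σ := hrpow_le hl hl1 hee
          have hKb : ‖v l σ'‖ ≤ Kt * l ^ e σ :=
            (hKl σ').trans (mul_le_mul (hKσ σ') hll (Real.rpow_nonneg hl.le _)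
              ((hK0 σ').trans (hKσ σ')))
          simpa [hu', hσ'] using hKb
        · simpa [hu', hσ'] using hb2
      · rw [Real.norm_eq_abs, abs_of_pos hl]
        calc l = l ^ (1:ℝ) := (Real.rpow_one l).symm
          _ ≤ l ^ e σ := hrpow_le hl hl1 (he_le1 σ)
          _ ≤ Kt * l ^ e σ := le_mul_of_one_le_left (Real.rpow_nonneg hl.le _) hKt1
    calc ‖y l σ‖ = ‖ℓ (u', l) σ‖ := by rw [hy]
      _ ≤ ‖ℓ (u', l)‖ := norm_le_pi_norm _ σ
      _ ≤ Cℓ * ‖(u', l)‖ := hℓop _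
      _ ≤ Cℓ * (Kt * l ^ e σ) := mul_le_mul_of_nonneg_left hub hCℓ0
      _ = M * l ^ e σ := by rw [hMdef]; ring
  -- Step 3 : smallness of y, and bound on q
  have hsmall : ∀ᶠ l in F, ∀ σ, M * l ^ e σ ≤ ε := by
    rw [Filter.eventually_all]
    intro σ
    have h1 : ContinuousAt (fun l : ℝ => l ^ e σ) 0 :=
      Real.continuousAt_rpow_const 0 (e σ) (Or.inr (he_pos σ).le)
    have h2 : Filter.Tendsto (fun l : ℝ => l ^ e σ) F (nhds 0) := by
      have := h1.tendsto.mono_left (nhdsWithin_le_nhds (s := Set.Ioi (0:ℝ)))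
      simpa [Real.zero_rpow (he_pos σ).ne'] using this
    have ht : Filter.Tendsto (fun l : ℝ => M * l ^ e σ) F (nhds 0) := by
      simpa using h2.const_mul M
    exact (ht.eventually_lt_const hε).mono fun l h => h.le
  have hεl : ∀ᶠ l in F, |l| ≤ ε := by
    filter_upwards [hFpos, (eventually_lt_nhds hε).filter_mono nhdsWithin_le_nhds] with l hl hlε
    rw [abs_of_pos hl]; exact hlε.le
  set C2 : ℝ := C * (M + 1) ^ 2 with hC2def
  have hC20 : 0 ≤ C2 := by positivity
  have hqτ : ∀ᶠ l in F, ∀ τ : S, ‖q (y l, l) τ‖ ≤ C2 * l ^ (2 * e τ) := by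
    filter_upwards [hFpos, hF1, hyb, hsmall, hεl] with l hl hl1 hylb hsm hle
    intro τ
    have hyε : ∀ σ, ‖y l σ‖ ≤ ε := fun σ => (hylb σ).trans (hsm σ)
    have hq1 := hqb τ (y l) l hyε hle
    have hup : upMax (y l) τ ≤ M * l ^ e τ := by
      apply Finset.sup'_le
      intro σ hσ
      have hσ' : τ ≤ σ := (Finset.mem_filter.mp hσ).2
      have hee : e τ ≤ e σ := he_mono σ τ (hμ σ τ hσ')
      exact (hylb σ).trans (mul_le_mul_of_nonneg_left (hrpow_le hl hl1 hee) hM0)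
    have habs : |l| ≤ l ^ e τ := by
      rw [abs_of_pos hl]
      calc l = l ^ (1:ℝ) := (Real.rpow_one l).symm
        _ ≤ l ^ e τ := hrpow_le hl hl1 (he_le1 τ)
    have hsum : upMax (y l) τ + |l| ≤ (M + 1) * l ^ e τ := by
      have := add_le_add hup habs; linarith
    have hmem : τ ∈ Finset.univ.filter (fun σ => τ ≤ σ) :=
      Finset.mem_filter.mpr ⟨Finset.mem_univ τ, le_refl τ⟩
    have hup1 : ‖y l τ‖ ≤ upMax (y l) τ :=
      Finset.le_sup' (fun σ => ‖y l σ‖) hmem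
    have hup0 : 0 ≤ upMax (y l) τ + |l| :=
      add_nonneg ((norm_nonneg (y l τ)).trans hup1) (abs_nonneg l)
    have hsq : (upMax (y l) τ + |l|) ^ 2 ≤ ((M + 1) * l ^ e τ) ^ 2 :=
      pow_le_pow_left₀ hup0 hsum 2
    have hpow : ((M + 1) * l ^ e τ) ^ 2 = (M + 1) ^ 2 * l ^ (2 * e τ) := by
      rw [mul_pow]
      congr 1
      rw [← Real.rpow_natCast (l ^ e τ) 2, ← Real.rpow_mul hl.le]
      norm_num [mul_comm]
    calc ‖q (y l, l) τ‖ ≤ C * (upMax (y l) τ + |l|) ^ 2 := hq1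
      _ ≤ C * ((M + 1) * l ^ e τ) ^ 2 := mul_le_mul_of_nonneg_left hsq hC.le
      _ = C2 * l ^ (2 * e τ) := by rw [hpow, hC2def]; ring
  -- Step 4 : conclusion
  intro τ
  constructor
  · intro h1
    obtain ⟨-, hO⟩ := hv1 τ h1
    obtain ⟨c, hc, hbd⟩ := hO.exists_pos
    apply IsBigO.of_bound (c + C2)
    filter_upwards [hvy, hqτ, hbd.bound, hFpos] with l hvyl hql hb hl
    obtain ⟨hyl, hvl⟩ := hvyl
    have hvτ : v l τ = y l τ + q (y l, l) τ := by rw [hvl]; rfl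
    have key : y l τ - (l ^ e τ) • θ τ = (v l τ - (l ^ e τ) • θ τ) - q (y l, l) τ := by
      rw [hvτ]; abel
    have hb' : ‖v l τ - (l ^ e τ) • θ τ‖ ≤ c * l ^ (2 * e τ) := by
      rw [norm_norm, Real.norm_eq_abs, abs_of_nonneg (Real.rpow_nonneg hl.le _), h2e τ] at hb
      exact hb
    rw [norm_norm, Real.norm_eq_abs, abs_of_nonneg (Real.rpow_nonneg hl.le _), h2e τ]
    calc ‖y l τ - (l ^ e τ) • θ τ‖
        ≤ ‖v l τ - (l ^ e τ) • θ τ‖ + ‖q (y l, l) τ‖ := by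
          rw [key]; exact norm_sub_le _ _
      _ ≤ c * l ^ (2 * e τ) + C2 * l ^ (2 * e τ) := add_le_add hb' (hql τ)
      _ = (c + C2) * l ^ (2 * e τ) := by ring
  · intro h0
    obtain ⟨c, hc, hbd⟩ := (hv0 τ h0).exists_pos
    have heτ : e τ = 1 := by simp [e, h0]
    apply IsBigO.of_bound (c + C2)
    filter_upwards [hvy, hqτ, hbd.bound, hFpos, hF1] with l hvyl hql hb hl hl1
    obtain ⟨hyl, hvl⟩ := hvyl
    have hvτ : v l τ = y l τ + q (y l, l) τ := by rw [hvl]; rfl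
    have hb' : ‖v l τ‖ ≤ c * l := by
      rw [norm_norm, Real.norm_eq_abs, abs_of_pos hl] at hb
      exact hb
    have hq2 : ‖q (y l, l) τ‖ ≤ C2 * l := by
      refine (hql τ).trans ?_
      have hll : l ^ (2 * e τ) ≤ l := by
        rw [heτ]
        calc l ^ (2 * (1:ℝ)) ≤ l ^ (1:ℝ) := hrpow_le hl hl1 (by norm_num)
          _ = l := Real.rpow_one l
      exact mul_le_mul_of_nonneg_left hll hC20
    rw [norm_norm, Real.norm_eq_abs, abs_of_pos hl]
    calc ‖y l τ‖ ≤ ‖v l τ‖ + ‖q (y l, l) τ‖ := by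
          have hkey : y l τ = v l τ - q (y l, l) τ := by rw [hvτ]; abel
          rw [hkey]; exact norm_sub_le _ _
      _ ≤ c * l + C2 * l := add_le_add hb' hq2
      _ = (c + C2) * l := by ring
end
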